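/- arXiv:2312.05556 — 2 statements merged into one kernel-verified Lean document; each statement's English description precedes it below -/
import Mathlib

section
/- Let σ be a C¹ matrix field (σ_{ij} : ℝ² → ℝ), τ a C² third-order tensor field (τ_{ijk} : ℝ² → ℝ), and r : ℝ² → ℝ² a C² vector field, all on a neighbourhood of the RVE domain v. Assume: (i) the equilibrium equations Σ_j ∂(σ_{ij} − Σ_k ∂τ_{ijk}/∂x_k)/∂x_j = 0 hold at every point of v; (ii) each component of σ, τ, the first derivatives ∂τ_{ijk}/∂x_l, r, and the first derivatives ∂r_i/∂x_j is boundary-periodic on v. Then the microfluctuation work vanishes: ∫_v Σ_{i,j} σ_{ij} ∂r_i/∂x_j dv + ∫_v Σ_{i,j,k} τ_{ijk} ∂²r_i/(∂x_j ∂x_k) dv = 0. -/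
open MeasureTheory

/-- First partial derivative `∂f/∂x_j` of a scalar field on `ℝ²`. -/
noncomputable def pd (f : (Fin 2 → ℝ) → ℝ) (j : Fin 2) (x : Fin 2 → ℝ) : ℝ :=
  fderiv ℝ f x (Pi.single j 1)

/-- Second partial derivative `∂²f/(∂x_j ∂x_k)` of a scalar field on `ℝ²`. -/
noncomputable def pd2 (f : (Fin 2 → ℝ) → ℝ) (j k : Fin 2) (x : Fin 2 → ℝ) : ℝ :=
  pd (fun y => pd f k y) j x

/-- A function on the rectangle `[a₁,b₁]×[a₂,b₂]` is boundary-periodic if it takes equal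
values at opposite points of the left/right and bottom/top edges. -/
def BoundaryPeriodic (a b : Fin 2 → ℝ) (h : (Fin 2 → ℝ) → ℝ) : Prop :=
  (∀ y ∈ Set.Icc (a 1) (b 1), h ![b 0, y] = h ![a 0, y]) ∧
  (∀ x ∈ Set.Icc (a 0) (b 0), h ![x, b 1] = h ![x, a 1])

/-!
The microfluctuation work is the integral over `v` of the divergence of the flux
`F_m = Σ_i ((σ_{im} − Σ_k ∂_k τ_{imk}) r_i + Σ_j τ_{ijm} ∂_j r_i)`:
expanding `Σ_m ∂_m F_m`, the terms `∂_m τ_{ijm} ∂_j r_i` cancel, symmetry of second derivatives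
turns `τ_{ijm} ∂_m ∂_j r_i` into the second-gradient work density, and what remains is
`Σ_i r_i Σ_j ∂_j (σ_{ij} − Σ_k ∂_k τ_{ijk})`, which vanishes by equilibrium. By the divergence
theorem, `∫_v div F` is a sum of differences of integrals of `F_m` over opposite faces of `v`,
and these cancel because `F` is boundary-periodic.
-/

section PartialDerivatives

variable {f u v : (Fin 2 → ℝ) → ℝ} {x : Fin 2 → ℝ} {j k : Fin 2}

lemma pd_fun_add (hu : DifferentiableAt ℝ u x) (hv : DifferentiableAt ℝ v x) :
    pd (fun y => u y + v y) j x = pd u j x + pd v j x := by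
  simp [pd, fderiv_fun_add hu hv]

lemma pd_fun_mul (hu : DifferentiableAt ℝ u x) (hv : DifferentiableAt ℝ v x) :
    pd (fun y => u y * v y) j x = pd u j x * v x + u x * pd v j x := by
  simp only [pd, fderiv_fun_mul hu hv, add_apply, smul_apply, smul_eq_mul]
  ring

lemma pd_fun_sum {ι : Type*} (s : Finset ι) {g : ι → (Fin 2 → ℝ) → ℝ}
    (hg : ∀ i ∈ s, DifferentiableAt ℝ (g i) x) :
    pd (fun y => ∑ i ∈ s, g i y) j x = ∑ i ∈ s, pd (g i) j x := by
  simp [pd, fderiv_fun_sum hg]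

lemma ContDiffAt.pd {n : WithTop ℕ∞} (hf : ContDiffAt ℝ (n + 1) f x) (j : Fin 2) :
    ContDiffAt ℝ n (pd f j) x :=
  hf.fderiv_right_succ.clm_apply contDiffAt_const

lemma pd2_eq_fderiv_fderiv (hf : DifferentiableAt ℝ (fderiv ℝ f) x) :
    pd2 f j k x = fderiv ℝ (fderiv ℝ f) x (Pi.single j 1) (Pi.single k 1) := by
  simp [pd2, pd, fderiv_clm_apply hf (differentiableAt_const _)]

lemma ContDiffAt.pd2_comm (hf : ContDiffAt ℝ 2 f x) : pd2 f j k x = pd2 f k j x := by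
  have hf' : DifferentiableAt ℝ (fderiv ℝ f) x :=
    (hf.fderiv_right (m := 1) le_rfl).differentiableAt one_ne_zero
  rw [pd2_eq_fderiv_fderiv hf', pd2_eq_fderiv_fderiv hf']
  exact hf.isSymmSndFDerivAt (by simp) _ _

end PartialDerivatives

namespace BoundaryPeriodic

variable {a b : Fin 2 → ℝ} {u v : (Fin 2 → ℝ) → ℝ}

lemma map₂ (op : ℝ → ℝ → ℝ) (hu : BoundaryPeriodic a b u) (hv : BoundaryPeriodic a b v) :
    BoundaryPeriodic a b (fun y => op (u y) (v y)) :=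
  ⟨fun y hy => by simp only [hu.1 y hy, hv.1 y hy],
   fun x hx => by simp only [hu.2 x hx, hv.2 x hx]⟩

lemma add (hu : BoundaryPeriodic a b u) (hv : BoundaryPeriodic a b v) :
    BoundaryPeriodic a b (fun y => u y + v y) :=
  hu.map₂ (· + ·) hv

lemma sub (hu : BoundaryPeriodic a b u) (hv : BoundaryPeriodic a b v) :
    BoundaryPeriodic a b (fun y => u y - v y) :=
  hu.map₂ (· - ·) hv

lemma mul (hu : BoundaryPeriodic a b u) (hv : BoundaryPeriodic a b v) :
    BoundaryPeriodic a b (fun y => u y * v y) :=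
  hu.map₂ (· * ·) hv

lemma sum {ι : Type*} (s : Finset ι) {g : ι → (Fin 2 → ℝ) → ℝ}
    (hg : ∀ i ∈ s, BoundaryPeriodic a b (g i)) :
    BoundaryPeriodic a b (fun y => ∑ i ∈ s, g i y) :=
  ⟨fun y hy => Finset.sum_congr rfl fun i hi => (hg i hi).1 y hy,
   fun x hx => Finset.sum_congr rfl fun i hi => (hg i hi).2 x hx⟩

end BoundaryPeriodic

lemma Fin.insertNth_zero_fin_two {α : Type*} (c : α) (x : Fin 1 → α) :
    Fin.insertNth (0 : Fin 2) c x = ![c, x 0] := by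
  ext t; fin_cases t <;> rfl

lemma Fin.insertNth_one_fin_two {α : Type*} (c : α) (x : Fin 1 → α) :
    Fin.insertNth (1 : Fin 2) c x = ![x 0, c] := by
  ext t; fin_cases t <;> rfl

theorem integral_sum_pd_eq_zero_of_boundaryPeriodic {a b : Fin 2 → ℝ}
    {F : Fin 2 → (Fin 2 → ℝ) → ℝ} (hF : ∀ m, ∀ x ∈ Set.Icc a b, ContDiffAt ℝ 1 (F m) x)
    (hper : ∀ m, BoundaryPeriodic a b (F m)) :
    ∫ x in Set.Icc a b, ∑ m, pd (F m) m x = 0 := by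
  by_cases hab : a ≤ b
  swap
  · simp [Set.Icc_eq_empty hab]
  have hdiv := integral_divergence_of_hasFDerivAt_off_countable' a b hab F
    (fun m x => fderiv ℝ (F m) x) ∅ Set.countable_empty
    (fun m => continuousOn_of_forall_continuousAt fun x hx => (hF m x hx).continuousAt)
    (fun x hx m => ((hF m x (Set.Ioo_subset_Icc_self (Set.pi_univ_Ioo_subset a b hx.1))
      ).differentiableAt one_ne_zero).hasFDerivAt)
    (ContinuousOn.integrableOn_Icc (continuousOn_finsetSum _ fun m _ =>
      continuousOn_of_forall_continuousAt fun x hx => ((hF m x hx).pd (n := 0) m).continuousAt))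
  refine hdiv.trans ?_
  have left_right : ∫ x in Set.Icc (a ∘ Fin.succAbove 0) (b ∘ Fin.succAbove 0),
      F 0 (Fin.insertNth 0 (b 0) x) = ∫ x in Set.Icc (a ∘ Fin.succAbove 0) (b ∘ Fin.succAbove 0),
      F 0 (Fin.insertNth 0 (a 0) x) :=
    setIntegral_congr_fun measurableSet_Icc fun x hx => by
      simpa only [Fin.insertNth_zero_fin_two] using (hper 0).1 (x 0) ⟨hx.1 0, hx.2 0⟩
  have bottom_top : ∫ x in Set.Icc (a ∘ Fin.succAbove 1) (b ∘ Fin.succAbove 1),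
      F 1 (Fin.insertNth 1 (b 1) x) = ∫ x in Set.Icc (a ∘ Fin.succAbove 1) (b ∘ Fin.succAbove 1),
      F 1 (Fin.insertNth 1 (a 1) x) :=
    setIntegral_congr_fun measurableSet_Icc fun x hx => by
      simpa only [Fin.insertNth_one_fin_two] using (hper 1).2 (x 0) ⟨hx.1 0, hx.2 0⟩
  rw [Fin.sum_univ_two, left_right, bottom_top, sub_self, sub_self, add_zero]

section MicroFlux

variable (σ : Fin 2 → Fin 2 → (Fin 2 → ℝ) → ℝ) (τ : Fin 2 → Fin 2 → Fin 2 → (Fin 2 → ℝ) → ℝ)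
  (r : (Fin 2 → ℝ) → Fin 2 → ℝ)

noncomputable def effectiveStress (i j : Fin 2) (y : Fin 2 → ℝ) : ℝ :=
  σ i j y - ∑ k, pd (τ i j k) k y

noncomputable def microFlux (m : Fin 2) (y : Fin 2 → ℝ) : ℝ :=
  ∑ i, (effectiveStress σ τ i m y * r y i + ∑ j, τ i j m y * pd (fun z => r z i) j y)

variable {σ τ r} {x : Fin 2 → ℝ}

lemma ContDiffAt.effectiveStress (hσ : ∀ i j, ContDiffAt ℝ 1 (σ i j) x)
    (hτ : ∀ i j k, ContDiffAt ℝ 2 (τ i j k) x) (i j : Fin 2) :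
    ContDiffAt ℝ 1 (effectiveStress σ τ i j) x :=
  (hσ i j).sub (ContDiffAt.sum fun k _ => (hτ i j k).pd k)

lemma ContDiffAt.microFlux (hσ : ∀ i j, ContDiffAt ℝ 1 (σ i j) x)
    (hτ : ∀ i j k, ContDiffAt ℝ 2 (τ i j k) x) (hr : ContDiffAt ℝ 2 r x) (m : Fin 2) :
    ContDiffAt ℝ 1 (microFlux σ τ r m) x :=
  ContDiffAt.sum fun i _ =>
    ((ContDiffAt.effectiveStress hσ hτ i m).mul ((contDiffAt_pi.1 hr i).of_le one_le_two)).add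
      (ContDiffAt.sum fun j _ => ((hτ i j m).of_le one_le_two).mul ((contDiffAt_pi.1 hr i).pd j))

lemma pd_microFlux (hσ : ∀ i j, ContDiffAt ℝ 1 (σ i j) x)
    (hτ : ∀ i j k, ContDiffAt ℝ 2 (τ i j k) x) (hr : ContDiffAt ℝ 2 r x) (m : Fin 2) :
    pd (microFlux σ τ r m) m x = ∑ i, (pd (effectiveStress σ τ i m) m x * r x i
      + effectiveStress σ τ i m x * pd (fun z => r z i) m x
      + ∑ j, (pd (τ i j m) m x * pd (fun z => r z i) j x
        + τ i j m x * pd2 (fun z => r z i) m j x)) := by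
  have hs i := (ContDiffAt.effectiveStress hσ hτ i m).differentiableAt one_ne_zero
  have hri i := ((contDiffAt_pi.1 hr i).differentiableAt two_ne_zero)
  have hdri i j := (((contDiffAt_pi.1 hr i).pd (n := 1) j).differentiableAt one_ne_zero)
  have hτ' i j := (hτ i j m).differentiableAt two_ne_zero
  have hτdr i j := (hτ' i j).fun_mul (hdri i j)
  have hsum i := DifferentiableAt.fun_sum (u := Finset.univ) fun j _ => hτdr i j
  unfold microFlux
  rw [pd_fun_sum _ fun i _ => ((hs i).fun_mul (hri i)).fun_add (hsum i)]
  refine Finset.sum_congr rfl fun i _ => ?_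
  rw [pd_fun_add ((hs i).fun_mul (hri i)) (hsum i), pd_fun_mul (hs i) (hri i),
    pd_fun_sum _ fun j _ => hτdr i j]
  simp only [pd_fun_mul (hτ' _ _) (hdri _ _), pd2]

lemma sum_pd_microFlux (hσ : ∀ i j, ContDiffAt ℝ 1 (σ i j) x)
    (hτ : ∀ i j k, ContDiffAt ℝ 2 (τ i j k) x) (hr : ContDiffAt ℝ 2 r x) :
    ∑ m, pd (microFlux σ τ r m) m x =
      ∑ i, r x i * ∑ j, pd (effectiveStress σ τ i j) j x
        + ((∑ i, ∑ j, σ i j x * pd (fun y => r y i) j x)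
          + ∑ i, ∑ j, ∑ k, τ i j k x * pd2 (fun y => r y i) j k x) := by
  have hsymm i := (contDiffAt_pi.1 hr i).pd2_comm (j := 1) (k := 0)
  simp only [pd_microFlux hσ hτ hr, effectiveStress, Fin.sum_univ_two] at hsymm ⊢
  rw [hsymm, hsymm]
  ring

lemma continuousAt_sum_mul_pd (hσ : ∀ i j, ContinuousAt (σ i j) x) (hr : ContDiffAt ℝ 2 r x) :
    ContinuousAt (fun y => ∑ i, ∑ j, σ i j y * pd (fun z => r z i) j y) x := by
  have hdr i j := ((contDiffAt_pi.1 hr i).pd (n := 1) j).continuousAt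
  fun_prop

lemma continuousAt_sum_mul_pd2 (hτ : ∀ i j k, ContinuousAt (τ i j k) x)
    (hr : ContDiffAt ℝ 2 r x) :
    ContinuousAt (fun y => ∑ i, ∑ j, ∑ k, τ i j k y * pd2 (fun z => r z i) j k y) x := by
  have hd2r i j k : ContinuousAt (pd2 (fun z => r z i) j k) x :=
    (((contDiffAt_pi.1 hr i).pd (n := 1) k).pd (n := 0) j).continuousAt
  fun_prop

end MicroFlux

lemma BoundaryPeriodic.microFlux {a b : Fin 2 → ℝ} {σ : Fin 2 → Fin 2 → (Fin 2 → ℝ) → ℝ}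
    {τ : Fin 2 → Fin 2 → Fin 2 → (Fin 2 → ℝ) → ℝ} {r : (Fin 2 → ℝ) → Fin 2 → ℝ}
    (hσ : ∀ i j, BoundaryPeriodic a b (σ i j)) (hτ : ∀ i j k, BoundaryPeriodic a b (τ i j k))
    (hdτ : ∀ i j k l, BoundaryPeriodic a b (pd (τ i j k) l))
    (hr : ∀ i, BoundaryPeriodic a b (fun x => r x i))
    (hdr : ∀ i j, BoundaryPeriodic a b (pd (fun y => r y i) j)) (m : Fin 2) :
    BoundaryPeriodic a b (microFlux σ τ r m) :=
  BoundaryPeriodic.sum _ fun i _ =>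
    (((hσ i m).sub (BoundaryPeriodic.sum _ fun k _ => hdτ i m k k)).mul (hr i)).add
      (BoundaryPeriodic.sum _ fun j _ => (hτ i j m).mul (hdr i j))

theorem microfluctuation_work_vanishes_general
    (a b : Fin 2 → ℝ)
    (U : Set (Fin 2 → ℝ)) (hU : IsOpen U) (hvU : Set.Icc a b ⊆ U)
    (σ : Fin 2 → Fin 2 → (Fin 2 → ℝ) → ℝ)
    (hσ : ∀ i j, ContDiffOn ℝ 1 (σ i j) U)
    (τ : Fin 2 → Fin 2 → Fin 2 → (Fin 2 → ℝ) → ℝ)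
    (hτ : ∀ i j k, ContDiffOn ℝ 2 (τ i j k) U)
    (r : (Fin 2 → ℝ) → Fin 2 → ℝ) (hr : ContDiffOn ℝ 2 r U)
    (hequil : ∀ x ∈ Set.Icc a b, ∀ i,
        ∑ j, pd (fun y => σ i j y - ∑ k, pd (τ i j k) k y) j x = 0)
    (hperσ : ∀ i j, BoundaryPeriodic a b (σ i j))
    (hperτ : ∀ i j k, BoundaryPeriodic a b (τ i j k))
    (hperdτ : ∀ i j k l, BoundaryPeriodic a b (fun x => pd (τ i j k) l x))
    (hperr : ∀ i, BoundaryPeriodic a b (fun x => r x i))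
    (hperdr : ∀ i j, BoundaryPeriodic a b (fun x => pd (fun y => r y i) j x)) :
    (∫ x in Set.Icc a b, ∑ i, ∑ j, σ i j x * pd (fun y => r y i) j x)
      + (∫ x in Set.Icc a b,
          ∑ i, ∑ j, ∑ k, τ i j k x * pd2 (fun y => r y i) j k x) = 0 := by
  have hσx x (hx : x ∈ Set.Icc a b) i j := (hσ i j).contDiffAt (hU.mem_nhds (hvU hx))
  have hτx x (hx : x ∈ Set.Icc a b) i j k := (hτ i j k).contDiffAt (hU.mem_nhds (hvU hx))
  have hrx x (hx : x ∈ Set.Icc a b) := hr.contDiffAt (hU.mem_nhds (hvU hx))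
  have hdiv x (hx : x ∈ Set.Icc a b) := by
    have hequil' : ∀ i, ∑ j, pd (effectiveStress σ τ i j) j x = 0 := hequil x hx
    simpa only [hequil', mul_zero, Finset.sum_const_zero, zero_add] using
      sum_pd_microFlux (hσx x hx) (hτx x hx) (hrx x hx)
  have hint₁ := ContinuousOn.integrableOn_Icc (μ := volume) <| continuousOn_of_forall_continuousAt fun x hx =>
    continuousAt_sum_mul_pd (fun i j => (hσx x hx i j).continuousAt) (hrx x hx)
  have hint₂ := ContinuousOn.integrableOn_Icc (μ := volume) <| continuousOn_of_forall_continuousAt fun x hx =>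
    continuousAt_sum_mul_pd2 (fun i j k => (hτx x hx i j k).continuousAt) (hrx x hx)
  calc _ = ∫ x in Set.Icc a b, ∑ m, pd (microFlux σ τ r m) m x := by
        rw [← integral_add hint₁ hint₂]
        exact setIntegral_congr_fun measurableSet_Icc fun x hx => (hdiv x hx).symm
    _ = 0 := integral_sum_pd_eq_zero_of_boundaryPeriodic
        (fun m x hx => ContDiffAt.microFlux (hσx x hx) (hτx x hx) (hrx x hx) m)
        (BoundaryPeriodic.microFlux hperσ hperτ hperdτ hperr hperdr)

/-- under equilibrium `Σ_j ∂(σ_{ij} − Σ_k ∂τ_{ijk}/∂x_k)/∂x_j = 0` on the RVE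
`v = [a₁,b₁]×[a₂,b₂]` and boundary-periodicity of `σ`, `τ`, `∂τ/∂x`, `r` and `∂r/∂x`, the
microfluctuation work vanishes:
`∫_v Σ σ_{ij} ∂r_i/∂x_j + ∫_v Σ τ_{ijk} ∂²r_i/(∂x_j∂x_k) = 0`. -/
theorem microfluctuation_work_vanishes
    (a b : Fin 2 → ℝ) (hab0 : a 0 < b 0) (hab1 : a 1 < b 1)
    (U : Set (Fin 2 → ℝ)) (hU : IsOpen U) (hvU : Set.Icc a b ⊆ U)
    (σ : Fin 2 → Fin 2 → (Fin 2 → ℝ) → ℝ)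
    (hσ : ∀ i j, ContDiffOn ℝ 1 (σ i j) U)
    (τ : Fin 2 → Fin 2 → Fin 2 → (Fin 2 → ℝ) → ℝ)
    (hτ : ∀ i j k, ContDiffOn ℝ 2 (τ i j k) U)
    (r : (Fin 2 → ℝ) → Fin 2 → ℝ) (hr : ContDiffOn ℝ 2 r U)
    (hequil : ∀ x ∈ Set.Icc a b, ∀ i,
        ∑ j, pd (fun y => σ i j y - ∑ k, pd (τ i j k) k y) j x = 0)
    (hperσ : ∀ i j, BoundaryPeriodic a b (σ i j))
    (hperτ : ∀ i j k, BoundaryPeriodic a b (τ i j k))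
    (hperdτ : ∀ i j k l, BoundaryPeriodic a b (fun x => pd (τ i j k) l x))
    (hperr : ∀ i, BoundaryPeriodic a b (fun x => r x i))
    (hperdr : ∀ i j, BoundaryPeriodic a b (fun x => pd (fun y => r y i) j x)) :
    (∫ x in Set.Icc a b, ∑ i, ∑ j, σ i j x * pd (fun y => r y i) j x)
      + (∫ x in Set.Icc a b,
          ∑ i, ∑ j, ∑ k, τ i j k x * pd2 (fun y => r y i) j k x) = 0 :=
  microfluctuation_work_vanishes_general a b U hU hvU σ hσ τ hτ r hr hequil hperσ hperτ hperdτ hperr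
    hperdr
end

section
/- (Hill–Mandel macrohomogeneity condition, mechanical part.) Assume the RVE domain v has its centroid at the origin (∫_v x dv = 0). Let δε_M be a 2×2 real matrix, δg_M a minor-symmetric third-order tensor, and δr : ℝ² → ℝ² twice continuously differentiable on a neighbourhood of v; define the microscopic displacement variation (δu_m)_i(x) = Σ_j (δε_M)_{ij} x_j + (1/2) Σ_{j,k} (δg_M)_{ijk} x_j x_k + δr_i(x). Let σ (matrix field) and τ (third-order tensor field) be continuous on v, and suppose the microfluctuation condition ∫_v Σ_{i,j} σ_{ij} ∂δr_i/∂x_j dv + ∫_v Σ_{i,j,k} τ_{ijk} ∂²δr_i/(∂x_j ∂x_k) dv = 0 holds. Define the homogenized stresses (σ_M)_{ij} = (1/V)∫_v σ_{ij} dv and (τ_M)_{ijk} = (1/V)∫_v (τ_{ijk} + σ_{ij} x_k) dv. Then (1/V) ∫_v ( Σ_{i,j} σ_{ij} ∂(δu_m)_i/∂x_j + Σ_{i,j,k} τ_{ijk} ∂²(δu_m)_i/(∂x_j ∂x_k) ) dv = Σ_{i,j} (σ_M)_{ij} (δε_M)_{ij} + Σ_{i,j,k} (τ_M)_{ijk}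 (δg_M)_{ijk}. -/
/-!
Differentiating the ansatz and using the minor symmetry of `δg_M` gives
`∂_j δu_i = δε_ij + Σ_k δg_ijk x_k + ∂_j δr_i` and `∂_j ∂_k δu_i = δg_ijk + ∂_j ∂_k δr_i`
on a neighbourhood of `v`. The microscopic virtual work therefore splits pointwise into
`σ_ij δε_ij + (τ_ijk + σ_ij x_k) δg_ijk` plus the work done on the fluctuation `δr`. By linearity
of the integral the first part averages to `σ_M : δε_M + τ_M ⋮ δg_M`, and the second integrates
to zero by the microfluctuation condition.
-/

open MeasureTheory

open Filter Topology

section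
variable {f g : (Fin 2 → ℝ) → ℝ} {x : Fin 2 → ℝ}

lemma pd_add (hf : DifferentiableAt ℝ f x) (hg : DifferentiableAt ℝ g x) (j : Fin 2) :
    pd (fun y => f y + g y) j x = pd f j x + pd g j x := by
  simp only [pd, fderiv_fun_add hf hg, add_apply]

lemma pd_const_mul (hf : DifferentiableAt ℝ f x) (c : ℝ) (j : Fin 2) :
    pd (fun y => c * f y) j x = c * pd f j x := by
  simp only [pd, fderiv_const_mul hf, smul_apply, smul_eq_mul]

lemma pd_mul (hf : DifferentiableAt ℝ f x) (hg : DifferentiableAt ℝ g x) (j : Fin 2) :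
    pd (fun y => f y * g y) j x = f x * pd g j x + g x * pd f j x := by
  simp only [pd, fderiv_fun_mul hf hg, add_apply, smul_apply, smul_eq_mul]

lemma pd_sum {ι : Type*} {s : Finset ι} {F : ι → (Fin 2 → ℝ) → ℝ}
    (hF : ∀ i ∈ s, DifferentiableAt ℝ (F i) x) (j : Fin 2) :
    pd (fun y => ∑ i ∈ s, F i y) j x = ∑ i ∈ s, pd (F i) j x := by
  simp only [pd, fderiv_fun_sum hF, sum_apply]

lemma pd_const (c : ℝ) (j : Fin 2) : pd (fun _ => c) j x = 0 := by
  simp [pd]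

lemma pd_coord (m j : Fin 2) : pd (fun y => y m) j x = if m = j then 1 else 0 := by
  simp [pd, fderiv_apply, Pi.single_apply]

lemma Filter.EventuallyEq.pd_eq (h : f =ᶠ[𝓝 x] g) (j : Fin 2) : pd f j x = pd g j x := by
  simp only [pd, h.fderiv_eq]

lemma pd_linear (c : Fin 2 → ℝ) (j : Fin 2) :
    pd (fun y => ∑ m, c m * y m) j x = c j := by
  simp (disch := fun_prop) only [pd_sum, pd_const_mul, pd_coord, mul_ite, mul_one, mul_zero,
    Finset.sum_ite_eq', Finset.mem_univ, if_true]

lemma pd_quadratic (q : Fin 2 → Fin 2 → ℝ) (j : Fin 2) :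
    pd (fun y => ∑ m, ∑ k, q m k * y m * y k) j x = ∑ k, (q j k + q k j) * x k := by
  simp (disch := fun_prop) only [pd_sum, pd_mul, pd_const, pd_coord, mul_ite, mul_one, mul_zero,
    add_zero, Finset.sum_ite_irrel, Finset.sum_const_zero, Finset.sum_add_distrib,
    Finset.sum_ite_eq', Finset.mem_univ, if_true]
  rw [← Finset.sum_add_distrib]
  exact Finset.sum_congr rfl fun k _ => by ring

end

noncomputable def secondOrderDisplacement (c : Fin 2 → ℝ) (q : Fin 2 → Fin 2 → ℝ)
    (r : (Fin 2 → ℝ) → ℝ) (y : Fin 2 → ℝ) : ℝ :=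
  (∑ j, c j * y j) + (1/2) * (∑ j, ∑ k, q j k * y j * y k) + r y

section
variable {c : Fin 2 → ℝ} {q : Fin 2 → Fin 2 → ℝ} {r : (Fin 2 → ℝ) → ℝ} {x : Fin 2 → ℝ}

lemma pd_secondOrderDisplacement (hq : ∀ j k, q j k = q k j) (hr : DifferentiableAt ℝ r x)
    (j : Fin 2) :
    pd (secondOrderDisplacement c q r) j x = c j + ∑ k, q j k * x k + pd r j x := by
  unfold secondOrderDisplacement
  rw [pd_add (by fun_prop) hr, pd_add (by fun_prop) (by fun_prop), pd_linear,
    pd_const_mul (by fun_prop), pd_quadratic, Finset.mul_sum]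
  congr 2
  exact Finset.sum_congr rfl fun k _ => by rw [hq k j]; ring

lemma pd2_secondOrderDisplacement (hq : ∀ j k, q j k = q k j)
    (hr : ∀ᶠ y in 𝓝 x, DifferentiableAt ℝ r y) (k : Fin 2)
    (hr' : DifferentiableAt ℝ (fun y => pd r k y) x) (j : Fin 2) :
    pd2 (secondOrderDisplacement c q r) j k x = q j k + pd2 r j k x := by
  have hpd : (fun y => pd (secondOrderDisplacement c q r) k y)
      =ᶠ[𝓝 x] fun y => c k + ∑ l, q k l * y l + pd r k y :=
    hr.mono fun y hy => pd_secondOrderDisplacement hq hy k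
  rw [pd2, hpd.pd_eq, pd_add (by fun_prop) hr', pd_add (by fun_prop) (by fun_prop), pd_const,
    pd_linear, zero_add, hq]
  rfl

end

lemma ContDiffOn.pd {m n : WithTop ℕ∞} {f : (Fin 2 → ℝ) → ℝ} {U : Set (Fin 2 → ℝ)}
    (hf : ContDiffOn ℝ n f U) (hU : IsOpen U) (hmn : m + 1 ≤ n) (j : Fin 2) :
    ContDiffOn ℝ m (fun y => pd f j y) U :=
  (hf.fderiv_of_isOpen hU hmn).clm_apply contDiffOn_const

lemma virtualWork_secondOrderDisplacement {U : Set (Fin 2 → ℝ)} (hU : IsOpen U)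
    {r : Fin 2 → (Fin 2 → ℝ) → ℝ} (hr : ∀ i, ContDiffOn ℝ 2 (r i) U) (c : Fin 2 → Fin 2 → ℝ)
    {q : Fin 2 → Fin 2 → Fin 2 → ℝ} (hq : ∀ i j k, q i j k = q i k j) {x : Fin 2 → ℝ} (hx : x ∈ U)
    (s : Fin 2 → Fin 2 → ℝ) (t : Fin 2 → Fin 2 → Fin 2 → ℝ) :
    (∑ i, ∑ j, s i j * pd (secondOrderDisplacement (c i) (q i) (r i)) j x)
        + ∑ i, ∑ j, ∑ k, t i j k * pd2 (secondOrderDisplacement (c i) (q i) (r i)) j k x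
      = (∑ i, ∑ j, s i j * c i j) + (∑ i, ∑ j, ∑ k, (t i j k + s i j * x k) * q i j k)
        + ((∑ i, ∑ j, s i j * pd (r i) j x) + ∑ i, ∑ j, ∑ k, t i j k * pd2 (r i) j k x) := by
  have hdiff : ∀ i, ∀ y ∈ U, DifferentiableAt ℝ (r i) y := fun i y hy =>
    ((hr i).differentiableOn two_ne_zero).differentiableAt (hU.mem_nhds hy)
  have hdiff' : ∀ i k, DifferentiableAt ℝ (fun y => pd (r i) k y) x := fun i k =>
    (((hr i).pd hU (m := 1) (by norm_num) k).differentiableOn one_ne_zero).differentiableAt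
      (hU.mem_nhds hx)
  simp only [pd_secondOrderDisplacement (hq _) (hdiff _ x hx),
    pd2_secondOrderDisplacement (hq _) (eventually_of_mem (hU.mem_nhds hx) (hdiff _)) _
      (hdiff' _ _), Fin.sum_univ_two]
  ring

section
variable {α : Type*} [MeasurableSpace α] {μ : Measure α} {ι κ ν : Type*}
  [Fintype ι] [Fintype κ] [Fintype ν]

lemma integral_sum_mul_const (f : ι → α → ℝ) (c : ι → ℝ) (hf : ∀ i, Integrable (f i) μ) :
    ∫ x, ∑ i, f i x * c i ∂μ = ∑ i, (∫ x, f i x ∂μ) * c i := by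
  rw [integral_finsetSum _ fun i _ => (hf i).mul_const _]
  exact Finset.sum_congr rfl fun i _ => integral_mul_const _ _

lemma integral_sum_sum_mul_const (f : ι → κ → α → ℝ) (c : ι → κ → ℝ)
    (hf : ∀ i j, Integrable (f i j) μ) :
    ∫ x, ∑ i, ∑ j, f i j x * c i j ∂μ = ∑ i, ∑ j, (∫ x, f i j x ∂μ) * c i j := by
  rw [integral_finsetSum _ fun i _ => integrable_finsetSum _ fun j _ => (hf i j).mul_const _]
  exact Finset.sum_congr rfl fun i _ => integral_sum_mul_const _ _ (hf i)

lemma integral_sum_sum_sum_mul_const (f : ι → κ → ν → α → ℝ) (c : ι → κ → ν → ℝ)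
    (hf : ∀ i j k, Integrable (f i j k) μ) :
    ∫ x, ∑ i, ∑ j, ∑ k, f i j k x * c i j k ∂μ
      = ∑ i, ∑ j, ∑ k, (∫ x, f i j k x ∂μ) * c i j k := by
  rw [integral_finsetSum _ fun i _ => integrable_finsetSum _ fun j _ =>
    integrable_finsetSum _ fun k _ => (hf i j k).mul_const _]
  exact Finset.sum_congr rfl fun i _ => integral_sum_sum_mul_const _ _ (hf i)

end

theorem hill_mandel_mechanical_general
    (a b : Fin 2 → ℝ)
    (V : ℝ)
    (δεM : Fin 2 → Fin 2 → ℝ) (δgM : Fin 2 → Fin 2 → Fin 2 → ℝ)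
    (hδgM : ∀ i j k, δgM i j k = δgM i k j)
    (U : Set (Fin 2 → ℝ)) (hU : IsOpen U) (hvU : Set.Icc a b ⊆ U)
    (δr : (Fin 2 → ℝ) → Fin 2 → ℝ) (hδr : ContDiffOn ℝ 2 δr U)
    (δum : (Fin 2 → ℝ) → Fin 2 → ℝ)
    (hδum : ∀ x i, δum x i =
        (∑ j, δεM i j * x j) + (1/2) * (∑ j, ∑ k, δgM i j k * x j * x k) + δr x i)
    (σ : Fin 2 → Fin 2 → (Fin 2 → ℝ) → ℝ)
    (hσ : ∀ i j, ContinuousOn (σ i j) (Set.Icc a b))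
    (τ : Fin 2 → Fin 2 → Fin 2 → (Fin 2 → ℝ) → ℝ)
    (hτ : ∀ i j k, ContinuousOn (τ i j k) (Set.Icc a b))
    (hmicro : (∫ x in Set.Icc a b, ∑ i, ∑ j, σ i j x * pd (fun y => δr y i) j x)
        + (∫ x in Set.Icc a b,
            ∑ i, ∑ j, ∑ k, τ i j k x * pd2 (fun y => δr y i) j k x) = 0)
    (σM : Fin 2 → Fin 2 → ℝ)
    (hσM : ∀ i j, σM i j = (1/V) * ∫ x in Set.Icc a b, σ i j x)
    (τM : Fin 2 → Fin 2 → Fin 2 → ℝ)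
    (hτM : ∀ i j k, τM i j k = (1/V) * ∫ x in Set.Icc a b, (τ i j k x + σ i j x * x k)) :
    (1/V) * ∫ x in Set.Icc a b,
        ((∑ i, ∑ j, σ i j x * pd (fun y => δum y i) j x)
          + ∑ i, ∑ j, ∑ k, τ i j k x * pd2 (fun y => δum y i) j k x)
      = (∑ i, ∑ j, σM i j * δεM i j) + ∑ i, ∑ j, ∑ k, τM i j k * δgM i j k := by
  set v := Set.Icc a b
  have hint : ∀ f : (Fin 2 → ℝ) → ℝ, ContinuousOn f v → IntegrableOn f v := fun f hf =>
    hf.integrableOn_compact isCompact_Icc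
  have hr : ∀ i, ContDiffOn ℝ 2 (fun y => δr y i) U := contDiffOn_pi.mp hδr
  have hpd : ∀ i k, ContinuousOn (fun y => pd (fun z => δr z i) k y) v := fun i k =>
    ((hr i).pd hU (m := 0) (by norm_num) k).continuousOn.mono hvU
  have hpd2 : ∀ i j k, ContinuousOn (fun y => pd2 (fun z => δr z i) j k y) v := fun i j k =>
    (((hr i).pd hU (m := 1) (by norm_num) k).pd hU (m := 0) (by norm_num) j).continuousOn.mono
      hvU
  have hum : ∀ i, (fun y => δum y i)
      = secondOrderDisplacement (δεM i) (δgM i) (fun y => δr y i) :=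
    fun i => funext fun y => hδum y i
  simp only [hum]
  rw [setIntegral_congr_fun measurableSet_Icc fun x hx =>
      virtualWork_secondOrderDisplacement hU hr δεM hδgM (hvU hx) (fun i j => σ i j x)
        (fun i j k => τ i j k x),
    integral_add (hint _ (by fun_prop)) (hint _ (by fun_prop)),
    integral_add (hint _ (by fun_prop)) (hint _ (by fun_prop)),
    integral_add (hint _ (by fun_prop)) (hint _ (by fun_prop)), hmicro, add_zero,
    integral_sum_sum_mul_const _ _ fun i j => hint _ (hσ i j),
    integral_sum_sum_sum_mul_const _ _ fun i j k => hint _ (by fun_prop)]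
  simp only [hσM, hτM, mul_add, Finset.mul_sum, mul_assoc]

/-- Hill–Mandel, mechanical part: for the microscopic displacement variation
`(δu_m)_i(x) = Σ_j (δε_M)_{ij} x_j + (1/2) Σ_{j,k} (δg_M)_{ijk} x_j x_k + δr_i(x)` on an
RVE centred at the origin, whenever the microfluctuation work vanishes, the volume average
of the microscopic internal virtual work equals the macroscopic one:
`(1/V)∫_v (σ:δε_m + τ∶δg_m) = σ_M:δε_M + τ_M∶δg_M`. -/
theorem hill_mandel_mechanical
    (a b : Fin 2 → ℝ) (hab0 : a 0 < b 0) (hab1 : a 1 < b 1)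
    (V : ℝ) (hV : V = (b 0 - a 0) * (b 1 - a 1))
    (hcent : (∫ x in Set.Icc a b, x) = (0 : Fin 2 → ℝ))
    (δεM : Fin 2 → Fin 2 → ℝ) (δgM : Fin 2 → Fin 2 → Fin 2 → ℝ)
    (hδgM : ∀ i j k, δgM i j k = δgM i k j)
    (U : Set (Fin 2 → ℝ)) (hU : IsOpen U) (hvU : Set.Icc a b ⊆ U)
    (δr : (Fin 2 → ℝ) → Fin 2 → ℝ) (hδr : ContDiffOn ℝ 2 δr U)
    (δum : (Fin 2 → ℝ) → Fin 2 → ℝ)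
    (hδum : ∀ x i, δum x i =
        (∑ j, δεM i j * x j) + (1/2) * (∑ j, ∑ k, δgM i j k * x j * x k) + δr x i)
    (σ : Fin 2 → Fin 2 → (Fin 2 → ℝ) → ℝ)
    (hσ : ∀ i j, ContinuousOn (σ i j) (Set.Icc a b))
    (τ : Fin 2 → Fin 2 → Fin 2 → (Fin 2 → ℝ) → ℝ)
    (hτ : ∀ i j k, ContinuousOn (τ i j k) (Set.Icc a b))
    (hmicro : (∫ x in Set.Icc a b, ∑ i, ∑ j, σ i j x * pd (fun y => δr y i) j x)
        + (∫ x in Set.Icc a b,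
            ∑ i, ∑ j, ∑ k, τ i j k x * pd2 (fun y => δr y i) j k x) = 0)
    (σM : Fin 2 → Fin 2 → ℝ)
    (hσM : ∀ i j, σM i j = (1/V) * ∫ x in Set.Icc a b, σ i j x)
    (τM : Fin 2 → Fin 2 → Fin 2 → ℝ)
    (hτM : ∀ i j k, τM i j k = (1/V) * ∫ x in Set.Icc a b, (τ i j k x + σ i j x * x k)) :
    (1/V) * ∫ x in Set.Icc a b,
        ((∑ i, ∑ j, σ i j x * pd (fun y => δum y i) j x)
          + ∑ i, ∑ j, ∑ k, τ i j k x * pd2 (fun y => δum y i) j k x)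
      = (∑ i, ∑ j, σM i j * δεM i j) + ∑ i, ∑ j, ∑ k, τM i j k * δgM i j k :=
  hill_mandel_mechanical_general a b V δεM δgM hδgM U hU hvU δr hδr δum hδum σ hσ τ hτ hmicro σM hσM
    τM hτM
end
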